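/- In the transformed scheme Ḡ, a ground subterm is a redex if and only if it is of the form F̄ t₁ ... t_k Δ (the last argument is Δ); moreover in any term reachable from the initial non-terminal I, no argument t_i of such a redex contains an occurrence of Δ. -/

import Mathlib

/-- Simple types: ground type `o` and arrows. -/
inductive Ty : Type
  | o : Ty
  | arr : Ty → Ty → Ty
deriving DecidableEq

namespace Ty

/-- order(o)=0, order(τ₁→τ₂)=max(order τ₁ + 1, order τ₂). -/
def order : Ty → ℕ
  | .o => 0
  | .arr a b => max (a.order + 1) b.order

/-- The list τ₁,...,τ_k such that τ = τ₁ → ... → τ_k → o. -/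
def args : Ty → List Ty
  | .o => []
  | .arr a b => a :: b.args

/-- The arity of a type. -/
def arity (τ : Ty) : ℕ := τ.args.length

/-- The over-bar transformation: ō = o→o, (τ₁→τ₂)̄ = τ̄₁→τ̄₂. -/
def bar : Ty → Ty
  | .o => .arr .o .o
  | .arr a b => .arr a.bar b.bar

end Ty

/-- Applicative terms over a typed alphabet. -/
inductive Tm (α : Type) : Type
  | sym : α → Tm α
  | app : Tm α → Tm α → Tm α

/-- Typing judgment for terms over a typed alphabet. -/
inductive HasType {α : Type} (ty : α → Ty) : Tm α → Ty → Prop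
  | sym (a : α) : HasType ty (.sym a) (ty a)
  | app {t s : Tm α} {τ' τ : Ty} :
      HasType ty t (.arr τ' τ) → HasType ty s τ' → HasType ty (.app t s) τ

/-- `mkApp h [t₁,...,t_k] = h t₁ ... t_k`. -/
def mkApp {α : Type} (h : Tm α) (ts : List (Tm α)) : Tm α := ts.foldl .app h

/-- Subterm relation. -/
inductive Subt {α : Type} : Tm α → Tm α → Prop
  | refl (t : Tm α) : Subt t t
  | appL {s t u : Tm α} : Subt s t → Subt s (.app t u)
  | appR {s t u : Tm α} : Subt s u → Subt s (.app t u)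
/-- The typing environment for a rule body with variables of types given by
the argument types of τ. -/
def ruleEnv (Sig Nt : Type) (sigTy : Sig → Ty) (ntTy : Nt → Ty) (τ : Ty) :
    Sig ⊕ Nt ⊕ Fin τ.arity → Ty
  | .inl a => sigTy a
  | .inr (.inl F) => ntTy F
  | .inr (.inr i) => τ.args.get i

/-- A higher-order recursion scheme. -/
structure HORS where
  /-- terminal symbols -/
  Sig : Type
  sigTy : Sig → Ty
  sigOrder : ∀ a, (sigTy a).order ≤ 1
  /-- non-terminal symbols -/
  Nt : Type
  ntTy : Nt → Ty
  /-- the rewrite rule for each non-terminal `F x₁ ... x_k → e` given by its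
  right-hand side, a term over terminals, non-terminals and the variables. -/
  rule : (F : Nt) → Option (Tm (Sig ⊕ Nt ⊕ Fin (ntTy F).arity))
  ruleTyped : ∀ (F : Nt) (e : Tm (Sig ⊕ Nt ⊕ Fin (ntTy F).arity)), rule F = some e →
    HasType (ruleEnv Sig Nt sigTy ntTy (ntTy F)) e .o
  /-- initial non-terminal -/
  S : Nt
  S_ty : ntTy S = .o

namespace HORS

variable (G : HORS)

/-- Closed (rule-free) terms over terminals and non-terminals. -/
abbrev T : Type := Tm (G.Sig ⊕ G.Nt)

/-- Typing of closed symbols. -/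
def symTy : G.Sig ⊕ G.Nt → Ty
  | .inl a => G.sigTy a
  | .inr F => G.ntTy F

/-- Instantiation of a rule body with actual arguments. -/
def inst {k : ℕ} : Tm (G.Sig ⊕ G.Nt ⊕ Fin k) → (Fin k → G.T) → G.T
  | .sym (.inl a), _ => .sym (.inl a)
  | .sym (.inr (.inl F)), _ => .sym (.inr F)
  | .sym (.inr (.inr i)), ts => ts i
  | .app t s, ts => .app (inst t ts) (inst s ts)

/-- A redex: a fully applied non-terminal possessing a rewrite rule. -/
def IsRedex (t : G.T) : Prop :=
  ∃ (F : G.Nt) (ts : List G.T),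
    t = mkApp (.sym (.inr F)) ts ∧ ts.length = (G.ntTy F).arity ∧ (G.rule F).isSome

/-- A term contains a redex. -/
def HasRedex (t : G.T) : Prop := ∃ s, Subt s t ∧ G.IsRedex s

/-- Unrestricted rewriting. -/
inductive Step : G.T → G.T → Prop
  | head {F : G.Nt} {ts : List G.T} {e} (hr : G.rule F = some e)
      (hl : ts.length = (G.ntTy F).arity) :
      Step (mkApp (.sym (.inr F)) ts) (G.inst e (fun i => ts.get (Fin.cast hl.symm i)))
  | appL {t t' s : G.T} : Step t t' → Step (.app t s) (.app t' s)
  | appR {t s s' : G.T} : Step s s' → Step (.app t s) (.app t s')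

/-- Innermost-outermost rewriting: the arguments of the contracted redex
contain no redex. -/
inductive StepIO : G.T → G.T → Prop
  | head {F : G.Nt} {ts : List G.T} {e} (hr : G.rule F = some e)
      (hl : ts.length = (G.ntTy F).arity) (hio : ∀ s ∈ ts, ¬ G.HasRedex s) :
      StepIO (mkApp (.sym (.inr F)) ts) (G.inst e (fun i => ts.get (Fin.cast hl.symm i)))
  | appL {t t' s : G.T} : StepIO t t' → StepIO (.app t s) (.app t' s)
  | appR {t s s' : G.T} : StepIO s s' → StepIO (.app t s) (.app t s')

/-- Outermost-innermost rewriting: no redex strictly contains the contracted redex. -/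
inductive StepOI : G.T → G.T → Prop
  | head {F : G.Nt} {ts : List G.T} {e} (hr : G.rule F = some e)
      (hl : ts.length = (G.ntTy F).arity) :
      StepOI (mkApp (.sym (.inr F)) ts) (G.inst e (fun i => ts.get (Fin.cast hl.symm i)))
  | appL {t t' s : G.T} : ¬ G.IsRedex (.app t s) → StepOI t t' → StepOI (.app t s) (.app t' s)
  | appR {t s s' : G.T} : ¬ G.IsRedex (.app t s) → StepOI s s' → StepOI (.app t s) (.app t s')

/-- Terms accessible from the initial non-terminal by unrestricted derivations. -/
def Acc' : Set G.T := {t | Relation.ReflTransGen G.Step (.sym (.inr G.S)) t}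

/-- Terms accessible by IO derivations. -/
def AccIO : Set G.T := {t | Relation.ReflTransGen G.StepIO (.sym (.inr G.S)) t}

/-- Terms accessible by OI derivations. -/
def AccOI : Set G.T := {t | Relation.ReflTransGen G.StepOI (.sym (.inr G.S)) t}

end HORS

/-- Possibly infinite trees over Σ ∪ {⊥}, as partial labelings of positions;
`some none` is the label ⊥, `some (some a)` the label a ∈ Σ. -/
def LTree (σ : Type) : Type := List ℕ → Option (Option σ)

/-- The approximation order on trees. -/
def TLe {σ : Type} (t t' : LTree σ) : Prop :=
  ∀ u x, t u = some x → ∃ y, t' u = some y ∧ (x = none ∨ y = x)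

/-- `v` is the least upper bound of the set `A` of trees. -/
def IsTreeLub {σ : Type} (A : Set (LTree σ)) (v : LTree σ) : Prop :=
  (∀ t ∈ A, TLe t v) ∧ ∀ w, (∀ t ∈ A, TLe t w) → TLe v w

/-- Number of arguments in the application spine. -/
def Tm.nArgs {α : Type} : Tm α → ℕ
  | .sym _ => 0
  | .app t _ => t.nArgs + 1

namespace HORS

variable (G : HORS)

/-- The ⊥-transformation: the tree obtained from a term by replacing maximal
non-terminal-headed subterms with ⊥. -/
def bt : G.T → LTree G.Sig
  | .sym (.inl a) => fun u => if u = [] then some (some a) else none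
  | .sym (.inr _) => fun u => if u = [] then some none else none
  | .app t s => fun u =>
      match bt t [] with
      | some (some _) =>
          match u with
          | [] => bt t []
          | j :: v => if j = t.nArgs then bt s v else bt t u
      | _ => if u = [] then some none else none

end HORS
namespace Ty

lemma bar_args (τ : Ty) : τ.bar.args = τ.args.map Ty.bar ++ [Ty.o] := by
  induction τ with
  | o => rfl
  | arr a b iha ihb => simp [Ty.bar, Ty.args, ihb]

lemma bar_arity (τ : Ty) : τ.bar.arity = τ.arity + 1 := by
  simp [Ty.arity, bar_args]

lemma bar_args_get (τ : Ty) (i : Fin τ.arity) :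
    τ.bar.args.get (Fin.cast (bar_arity τ).symm i.castSucc) = (τ.args.get i).bar := by
  have hi : (i : ℕ) < (τ.args.map Ty.bar).length := by
    rw [List.length_map]; exact i.isLt
  have key : ∀ (h1 : (i : ℕ) < τ.bar.args.length),
      τ.bar.args[(i : ℕ)] = (τ.args[(i : ℕ)]'i.isLt).bar := by
    intro h1; simp [bar_args, List.getElem_append_left hi] <;> rfl
  exact List.get_eq_getElem.trans
    ((key _).trans (congrArg Ty.bar List.get_eq_getElem.symm))

lemma order_eq_zero {τ : Ty} (h : τ.order = 0) : τ = .o := by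
  cases τ with
  | o => rfl
  | arr a b => simp only [Ty.order, Nat.max_eq_zero_iff] at h; omega

lemma args_replicate {τ : Ty} (h : τ.order ≤ 1) : τ.args = List.replicate τ.arity .o := by
  induction τ with
  | o => rfl
  | arr a b iha ihb =>
      simp only [Ty.order, Nat.max_le] at h
      obtain ⟨h1, h2⟩ := h
      have ha : a = .o := order_eq_zero (by omega)
      subst ha
      have e1 : (Ty.arr .o b).args = .o :: b.args := rfl
      have e2 : (Ty.arr .o b).arity = b.arity + 1 := rfl
      rw [e1, e2, ihb h2, List.replicate_succ]

lemma args_foldr (τ : Ty) : τ.args.foldr .arr .o = τ := by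
  induction τ with
  | o => rfl
  | arr a b iha ihb => simp [Ty.args, ihb]

end Ty

namespace HORS

variable (G : HORS)

/-- Non-terminals of the transformed scheme Ḡ: the F̄'s, the ā's, and the two
ground non-terminals Δ (`false`) and I (`true`). -/
def NtBar : Type := G.Nt ⊕ G.Sig ⊕ Bool

/-- Types of the non-terminals of Ḡ. -/
def ntTyBar : G.NtBar → Ty
  | .inl F => (G.ntTy F).bar
  | .inr (.inl a) => (G.sigTy a).bar
  | .inr (.inr _) => .o

/-- The non-terminal Δ, as a term. -/
def deltaTm {k : ℕ} : Tm (G.Sig ⊕ G.NtBar ⊕ Fin k) := .sym (.inr (.inl (.inr (.inr false))))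

/-- The bar transformation ē of a rule body: terminals a become non-terminals
ā, non-terminals F become F̄, variables xᵢ become x̄ᵢ. -/
def barBody {τ : Ty} : Tm (G.Sig ⊕ G.Nt ⊕ Fin τ.arity) → Tm (G.Sig ⊕ G.NtBar ⊕ Fin τ.bar.arity)
  | .sym (.inl a) => .sym (.inr (.inl (.inr (.inl a))))
  | .sym (.inr (.inl F)) => .sym (.inr (.inl (.inl F)))
  | .sym (.inr (.inr i)) => .sym (.inr (.inr (Fin.cast (Ty.bar_arity τ).symm i.castSucc)))
  | .app t s => .app (barBody t) (barBody s)

/-- The body a (η₁ Δ) ... (η_k Δ) of the rule for ā. -/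
def aBody (a : G.Sig) : Tm (G.Sig ⊕ G.NtBar ⊕ Fin (G.sigTy a).bar.arity) :=
  mkApp (.sym (.inl a)) (List.ofFn fun i : Fin (G.sigTy a).arity =>
    .app (.sym (.inr (.inr (Fin.cast (Ty.bar_arity _).symm i.castSucc)))) G.deltaTm)

lemma hasType_mkApp {α : Type} (ty : α → Ty) :
    ∀ (ts : List (Tm α)) (h : Tm α),
      HasType ty h ((List.replicate ts.length Ty.o).foldr .arr .o) →
      (∀ t ∈ ts, HasType ty t .o) → HasType ty (mkApp h ts) .o := by
  intro ts
  induction ts with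
  | nil => intro h hh _; exact hh
  | cons t ts ih =>
      intro h hh hts
      have : HasType ty (.app h t) ((List.replicate ts.length Ty.o).foldr .arr .o) := by
        refine HasType.app ?_ (hts t (by simp))
        simpa [List.replicate_succ] using hh
      simpa [mkApp] using ih (.app h t) this (fun u hu => hts u (by simp [hu]))

lemma barBody_hasType (τ : Ty) {e : Tm (G.Sig ⊕ G.Nt ⊕ Fin τ.arity)} {σ : Ty}
    (h : HasType (ruleEnv G.Sig G.Nt G.sigTy G.ntTy τ) e σ) :
    HasType (ruleEnv G.Sig G.NtBar G.sigTy G.ntTyBar τ.bar) (G.barBody e) σ.bar := by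
  induction h with
  | sym x =>
      rcases x with a | F | i
      · exact HasType.sym _
      · exact HasType.sym _
      · show HasType _ _ ((τ.args.get i).bar)
        rw [← Ty.bar_args_get τ i]
        exact HasType.sym (ty := ruleEnv G.Sig G.NtBar G.sigTy G.ntTyBar τ.bar)
          (.inr (.inr (Fin.cast (Ty.bar_arity τ).symm i.castSucc)))
  | app h1 h2 ih1 ih2 => exact HasType.app ih1 ih2

lemma aBody_hasType (a : G.Sig) :
    HasType (ruleEnv G.Sig G.NtBar G.sigTy G.ntTyBar (G.sigTy a).bar) (G.aBody a) .o := by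
  apply hasType_mkApp
  · have hrep : G.sigTy a = (List.replicate
        ((List.ofFn fun i : Fin (G.sigTy a).arity =>
          (Tm.app (.sym (.inr (.inr (Fin.cast (Ty.bar_arity _).symm i.castSucc)))) G.deltaTm :
            Tm (G.Sig ⊕ G.NtBar ⊕ Fin (G.sigTy a).bar.arity))).length) Ty.o).foldr .arr .o := by
      rw [List.length_ofFn, ← Ty.args_replicate (G.sigOrder a), Ty.args_foldr]
    exact hrep ▸ HasType.sym (Sum.inl a)
  · intro t ht
    rw [List.mem_ofFn] at ht
    obtain ⟨i, rfl⟩ := ht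
    have key : ruleEnv G.Sig G.NtBar G.sigTy G.ntTyBar (G.sigTy a).bar
        (Sum.inr (Sum.inr (Fin.cast (Ty.bar_arity _).symm i.castSucc))) = Ty.arr Ty.o Ty.o := by
      show (G.sigTy a).bar.args.get (Fin.cast (Ty.bar_arity _).symm i.castSucc) = _
      rw [Ty.bar_args_get]
      have h0 : (G.sigTy a).args.get i = Ty.o := by
        exact (List.get_eq_getElem (l := (G.sigTy a).args) (i := i)).trans
          (by simp [Ty.args_replicate (G.sigOrder a)])
      rw [h0]; rfl
    have hη := HasType.sym (ty := ruleEnv G.Sig G.NtBar G.sigTy G.ntTyBar (G.sigTy a).bar)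
        (Sum.inr (Sum.inr (Fin.cast (Ty.bar_arity _).symm i.castSucc)))
    rw [key] at hη
    exact HasType.app (τ' := Ty.o) hη (HasType.sym _)

/-- The transformed scheme Ḡ. -/
def barScheme : HORS where
  Sig := G.Sig
  sigTy := G.sigTy
  sigOrder := G.sigOrder
  Nt := G.NtBar
  ntTy := G.ntTyBar
  rule := fun N => match N with
    | .inl F => (G.rule F).map (fun e =>
        (Tm.app (G.barBody e) G.deltaTm : Tm (G.Sig ⊕ G.NtBar ⊕ Fin (G.ntTy F).bar.arity)))
    | .inr (.inl a) => some (G.aBody a)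
    | .inr (.inr false) => none
    | .inr (.inr true) => some (.app (.sym (.inr (.inl (.inl G.S)))) G.deltaTm)
  ruleTyped := by
    rintro (F | a | (_ | _)) e he
    · replace he := Option.map_eq_some_iff.mp he
      obtain ⟨e₀, h₀, rfl⟩ := he
      exact HasType.app (τ' := .o) (G.barBody_hasType (G.ntTy F) (G.ruleTyped F e₀ h₀))
        (HasType.sym _)
    · cases he
      exact G.aBody_hasType a
    · cases he
    · cases he
      have h1 : HasType (ruleEnv G.Sig G.NtBar G.sigTy G.ntTyBar
            (G.ntTyBar (Sum.inr (Sum.inr true))))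
          (Tm.sym (Sum.inr (Sum.inl (Sum.inl G.S))))
          ((G.ntTy G.S).bar) := HasType.sym _
      rw [G.S_ty] at h1
      exact HasType.app (τ' := Ty.o) h1 (HasType.sym _)
  S := .inr (.inr true)
  S_ty := rfl

end HORS

/-- The non-terminal Δ of Ḡ. -/
def HORS.deltaNt (G : HORS) : G.NtBar := Sum.inr (Sum.inr false)

/-- The initial non-terminal I of Ḡ. -/
def HORS.initNt (G : HORS) : G.NtBar := Sum.inr (Sum.inr true)

/-!
Every term reachable from I in Ḡ is built by application from terminals, I and subterms `u Δ`,
where `u` is a partial application of some F̄ or ā to Δ-free partial applications, missing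
exactly its last argument. Contracting `F̄ u₁ … u_k Δ` gives `ē[ū := u] Δ` and contracting
`ā u₁ … u_k Δ` gives `a (u₁ Δ) … (u_k Δ)`, so this shape is preserved by rewriting. Partial
applications never have ground type, so they are not redexes, and the only redexes of a term of
this shape are I and its subterms `u Δ`.
-/

namespace Ty

lemma bar_ne_o : ∀ τ : Ty, τ.bar ≠ .o
  | .o => nofun
  | .arr _ _ => nofun

lemma arity_pos_of_ne_o {τ : Ty} (h : τ ≠ .o) : 0 < τ.arity := by
  cases τ with
  | o => exact absurd rfl h
  | arr => exact Nat.succ_pos _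

lemma arity_foldr_arr (l : List Ty) (c : Ty) :
    (l.foldr .arr c).arity = l.length + c.arity := by
  induction l with
  | nil => simp
  | cons a l ih => simp only [List.foldr_cons, arity, args, List.length_cons] at *; omega

lemma eq_map_bar_of_bar_eq_foldr : ∀ (τ : Ty) (tys : List Ty),
    τ.bar = tys.foldr .arr (.arr .o .o) → tys = τ.args.map bar
  | .o, [], _ => rfl
  | .o, [_], h => by cases h
  | .o, _ :: _ :: _, h => by cases h
  | .arr a _, [], h => absurd (Ty.arr.inj h).1 (bar_ne_o a)
  | .arr _ b, _ :: tys, h => by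
      obtain ⟨rfl, h'⟩ := Ty.arr.inj h
      simp [args, eq_map_bar_of_bar_eq_foldr b tys h']

lemma args_get_of_order_le_one {τ : Ty} (h : τ.order ≤ 1) (i : Fin τ.arity) :
    τ.args.get i = .o := by
  have : τ.args[(i : ℕ)]'i.isLt = .o := by simp [args_replicate h]
  exact this

lemma foldr_replicate_arity {τ : Ty} (h : τ.order ≤ 1) :
    (List.replicate τ.arity Ty.o).foldr .arr .o = τ := by
  rw [← args_replicate h, args_foldr]

end Ty

section mkApp

variable {α : Type}

lemma mkApp_append_singleton (h : Tm α) (l : List (Tm α)) (x : Tm α) :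
    mkApp h (l ++ [x]) = .app (mkApp h l) x := by
  simp [mkApp]

lemma mkApp_eq_sym {h : Tm α} {l : List (Tm α)} {x : α} (e : mkApp h l = .sym x) :
    l = [] ∧ h = .sym x := by
  rcases List.eq_nil_or_concat l with rfl | ⟨l, y, rfl⟩
  · exact ⟨rfl, e⟩
  · simp [mkApp_append_singleton] at e

lemma mkApp_sym_eq_app {c : α} {l : List (Tm α)} {t s : Tm α}
    (e : mkApp (.sym c) l = .app t s) : ∃ l', l = l' ++ [s] ∧ t = mkApp (.sym c) l' := by
  rcases List.eq_nil_or_concat l with rfl | ⟨l', x, rfl⟩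
  · cases e
  · rw [List.concat_eq_append, mkApp_append_singleton] at e
    injection e with e₁ e₂
    exact ⟨l', by rw [e₂, List.concat_eq_append], e₁.symm⟩

lemma mkApp_sym_inj {x y : α} {l₁ l₂ : List (Tm α)}
    (e : mkApp (.sym x) l₁ = mkApp (.sym y) l₂) : x = y ∧ l₁ = l₂ := by
  induction l₁ using List.reverseRecOn generalizing l₂ with
  | nil =>
      obtain ⟨rfl, e⟩ := mkApp_eq_sym e.symm
      exact ⟨Tm.sym.inj e, rfl⟩
  | append_singleton l a ih =>
      rw [mkApp_append_singleton] at e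
      obtain ⟨l₂, rfl, e'⟩ := mkApp_sym_eq_app e.symm
      obtain ⟨rfl, rfl⟩ := ih e'
      exact ⟨rfl, rfl⟩

lemma eq_of_subt_sym {s : Tm α} {x : α} (h : Subt s (.sym x)) : s = .sym x := by
  cases h
  rfl

lemma subt_mkApp_of_mem {h u : Tm α} {l : List (Tm α)} (hu : u ∈ l) : Subt u (mkApp h l) := by
  induction l using List.reverseRecOn with
  | nil => cases hu
  | append_singleton l a ih =>
      rw [mkApp_append_singleton]
      rcases List.mem_append.mp hu with hu | hu
      · exact .appL (ih hu)
      · rw [List.mem_singleton.mp hu]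
        exact .appR (.refl _)

end mkApp

namespace HORS

variable (G : HORS)

lemma inst_mkApp {k : ℕ} (θ : Fin k → G.T) :
    ∀ (l : List (Tm (G.Sig ⊕ G.Nt ⊕ Fin k))) (h : Tm (G.Sig ⊕ G.Nt ⊕ Fin k)),
      G.inst (mkApp h l) θ = mkApp (G.inst h θ) (l.map (G.inst · θ))
  | [], _ => rfl
  | a :: l, h => inst_mkApp θ l (.app h a)

variable {G}

lemma Step.hasRedex {t t' : G.T} (h : G.Step t t') : G.HasRedex t := by
  induction h with
  | head hr hl => exact ⟨_, .refl _, _, _, rfl, hl, by simp [hr]⟩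
  | appL _ ih => obtain ⟨s, hs, hr⟩ := ih; exact ⟨s, .appL hs, hr⟩
  | appR _ ih => obtain ⟨s, hs, hr⟩ := ih; exact ⟨s, .appR hs, hr⟩

variable (G)

inductive PartialApp : G.barScheme.T → Ty → Prop
  | nt (F : G.Nt) : PartialApp (.sym (.inr (.inl F))) (G.ntTy F).bar
  | term (a : G.Sig) : PartialApp (.sym (.inr (.inr (.inl a)))) (G.sigTy a).bar
  | app {t s : G.barScheme.T} {τ' τ : Ty} :
      PartialApp t (.arr τ' τ) → PartialApp s τ' → τ ≠ .o → PartialApp (.app t s) τ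

/-- The shape of the terms reachable from I: Δ occurs only as the argument completing a partial
application of some F̄ or ā whose remaining type is `o → o`. -/
inductive Shaped : G.barScheme.T → Ty → Prop
  | init : Shaped (.sym (.inr G.initNt)) .o
  | delta : Shaped (.sym (.inr G.deltaNt)) .o
  | term (a : G.Sig) : Shaped (.sym (.inl a)) (G.sigTy a)
  | app {t s : G.barScheme.T} {τ : Ty} :
      Shaped t (.arr .o τ) → Shaped s .o → Shaped (.app t s) τ
  | applyDelta {u : G.barScheme.T} :
      G.PartialApp u (.arr .o .o) → Shaped (.app u (.sym (.inr G.deltaNt))) .o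

variable {G}

lemma not_hasRedex_delta : ¬ G.barScheme.HasRedex (.sym (.inr G.deltaNt)) := by
  rintro ⟨s, hs, N, us, rfl, -, hsome⟩
  obtain ⟨rfl, e⟩ := mkApp_eq_sym (eq_of_subt_sym hs)
  cases e
  cases hsome

namespace PartialApp

lemma ne_o {u : G.barScheme.T} {σ : Ty} (h : G.PartialApp u σ) : σ ≠ .o := by
  cases h with
  | nt => exact Ty.bar_ne_o _
  | term => exact Ty.bar_ne_o _
  | app _ _ hne => exact hne

lemma not_subt_delta {u : G.barScheme.T} {σ : Ty} (h : G.PartialApp u σ) :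
    ¬ Subt (.sym (.inr G.deltaNt)) u := by
  induction h with
  | nt | term => intro hs; cases hs
  | app _ _ _ ih₁ ih₂ =>
      intro hs
      cases hs with
      | appL hs => exact ih₁ hs
      | appR hs => exact ih₂ hs

lemma subt {s u : G.barScheme.T} {σ : Ty} (h : G.PartialApp u σ) (hs : Subt s u) :
    ∃ σ', G.PartialApp s σ' := by
  induction hs generalizing σ with
  | refl => exact ⟨σ, h⟩
  | appL _ ih => cases h with | app h₁ _ _ => exact ih h₁
  | appR _ ih => cases h with | app _ h₂ _ => exact ih h₂

lemma spine {N : G.NtBar} {us : List G.barScheme.T} {σ : Ty}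
    (h : G.PartialApp (mkApp (.sym (.inr N)) us) σ) :
    ∃ tys : List Ty, G.ntTyBar N = tys.foldr .arr σ ∧ List.Forall₂ G.PartialApp us tys := by
  induction us using List.reverseRecOn generalizing σ with
  | nil => cases h <;> exact ⟨[], rfl, .nil⟩
  | append_singleton us u ih =>
      rw [mkApp_append_singleton] at h
      cases h with
      | app h₁ h₂ _ =>
          obtain ⟨tys, hty, hf⟩ := ih h₁
          refine ⟨tys ++ [_], ?_, List.rel_append hf (.cons h₂ .nil)⟩
          rw [hty, List.foldr_append]
          rfl

lemma arity_head {N : G.NtBar} {us : List G.barScheme.T} {σ : Ty}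
    (h : G.PartialApp (mkApp (.sym (.inr N)) us) σ) :
    (G.ntTyBar N).arity = us.length + σ.arity := by
  obtain ⟨tys, hty, hf⟩ := h.spine
  rw [hty, Ty.arity_foldr_arr, hf.length_eq]

lemma not_isRedex {u : G.barScheme.T} {σ : Ty} (h : G.PartialApp u σ) :
    ¬ G.barScheme.IsRedex u := by
  rintro ⟨N, us, rfl, hl, -⟩
  have := h.arity_head
  have := Ty.arity_pos_of_ne_o h.ne_o
  change us.length = (G.ntTyBar N).arity at hl
  omega

lemma not_hasRedex {u : G.barScheme.T} {σ : Ty} (h : G.PartialApp u σ) :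
    ¬ G.barScheme.HasRedex u := by
  rintro ⟨s, hs, hr⟩
  obtain ⟨σ', h'⟩ := h.subt hs
  exact h'.not_isRedex hr

lemma inst_barBody {τ σ : Ty} {e : Tm (G.Sig ⊕ G.Nt ⊕ Fin τ.arity)}
    (he : HasType (ruleEnv G.Sig G.Nt G.sigTy G.ntTy τ) e σ)
    {θ : Fin τ.bar.arity → G.barScheme.T}
    (hθ : ∀ i : Fin τ.arity,
      G.PartialApp (θ (Fin.cast (Ty.bar_arity τ).symm i.castSucc)) (τ.args.get i).bar) :
    G.PartialApp (G.barScheme.inst (G.barBody e) θ) σ.bar := by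
  induction he with
  | sym x =>
      rcases x with a | F | i
      · exact .term a
      · exact .nt F
      · exact hθ i
  | app _ _ ih₁ ih₂ => exact .app ih₁ ih₂ (Ty.bar_ne_o _)

lemma get_append_of_forall₂ {τ : Ty} {us : List G.barScheme.T}
    (hus : List.Forall₂ G.PartialApp us (τ.args.map Ty.bar)) (d : G.barScheme.T)
    (hl : (us ++ [d]).length = τ.bar.arity) (i : Fin τ.arity) :
    G.PartialApp ((us ++ [d]).get (Fin.cast hl.symm (Fin.cast (Ty.bar_arity τ).symm i.castSucc)))
      (τ.args.get i).bar := by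
  have hi : (i : ℕ) < us.length := by
    rw [hus.length_eq, List.length_map]; exact i.isLt
  have hget : (us ++ [d]).get (Fin.cast hl.symm (Fin.cast (Ty.bar_arity τ).symm i.castSucc)) =
      us.get ⟨i, hi⟩ := List.getElem_append_left hi
  have hty : (τ.args.map Ty.bar).get ⟨i, hus.length_eq ▸ hi⟩ = (τ.args.get i).bar :=
    List.getElem_map _
  rw [hget, ← hty]
  exact hus.get _ _

end PartialApp

namespace Shaped

lemma subt {s t : G.barScheme.T} {τ : Ty} (h : G.Shaped t τ) (hs : Subt s t) :
    (∃ τ', G.Shaped s τ') ∨ ∃ σ, G.PartialApp s σ := by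
  induction hs generalizing τ with
  | refl => exact .inl ⟨τ, h⟩
  | appL hs ih =>
      cases h with
      | app h₁ _ => exact ih h₁
      | applyDelta hu => exact .inr (hu.subt hs)
  | appR hs ih =>
      cases h with
      | app _ h₂ => exact ih h₂
      | applyDelta _ => cases hs; exact .inl ⟨.o, .delta⟩

lemma exists_eq_mkApp_term {v : G.barScheme.T} {τ' τ : Ty} (h : G.Shaped v (.arr τ' τ)) :
    ∃ a vs, v = mkApp (.sym (.inl a)) vs := by
  generalize hσ : Ty.arr τ' τ = σ at h
  induction h generalizing τ' τ with
  | init | delta | applyDelta _ => cases hσ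
  | term a => exact ⟨a, [], rfl⟩
  | app _ _ ih _ =>
      obtain ⟨a, vs, rfl⟩ := ih rfl
      exact ⟨a, vs ++ [_], (mkApp_append_singleton _ _ _).symm⟩

lemma mkApp_inv {N : G.NtBar} {ts : List G.barScheme.T} {τ : Ty}
    (h : G.Shaped (mkApp (.sym (.inr N)) ts) τ) :
    (ts = [] ∧ τ = .o ∧ (N = G.initNt ∨ N = G.deltaNt)) ∨
      ∃ us, ts = us ++ [.sym (.inr G.deltaNt)] ∧ τ = .o ∧
        G.PartialApp (mkApp (.sym (.inr N)) us) (.arr .o .o) := by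
  generalize hv : mkApp (.sym (.inr N)) ts = v at h
  cases h with
  | init => obtain ⟨rfl, e⟩ := mkApp_eq_sym hv; cases e; exact .inl ⟨rfl, rfl, .inl rfl⟩
  | delta => obtain ⟨rfl, e⟩ := mkApp_eq_sym hv; cases e; exact .inl ⟨rfl, rfl, .inr rfl⟩
  | term => cases (mkApp_eq_sym hv).2
  | app h₁ _ =>
      obtain ⟨us, rfl, hu⟩ := mkApp_sym_eq_app hv
      obtain ⟨a, vs, rfl⟩ := h₁.exists_eq_mkApp_term
      cases (mkApp_sym_inj hu).1
  | applyDelta hu =>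
      obtain ⟨us, rfl, rfl⟩ := mkApp_sym_eq_app hv
      exact .inr ⟨us, rfl, rfl, hu⟩

lemma eq_of_isRedex {s : G.barScheme.T} {τ : Ty} (h : G.Shaped s τ)
    (hr : G.barScheme.IsRedex s) :
    s = .sym (.inr G.initNt) ∨
      ∃ N us, s = mkApp (.sym (.inr N)) (us ++ [.sym (.inr G.deltaNt)]) ∧
        G.PartialApp (mkApp (.sym (.inr N)) us) (.arr .o .o) := by
  obtain ⟨N, ts, rfl, -, hsome⟩ := hr
  rcases h.mkApp_inv with ⟨rfl, -, rfl | rfl⟩ | ⟨us, rfl, -, hu⟩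
  · exact .inl rfl
  · cases hsome
  · exact .inr ⟨N, us, rfl, hu⟩

lemma mkApp_of_ground {τ : Ty} :
    ∀ {h : G.barScheme.T} {gs : List G.barScheme.T},
      G.Shaped h ((List.replicate gs.length .o).foldr .arr τ) →
        (∀ g ∈ gs, G.Shaped g .o) → G.Shaped (_root_.mkApp h gs) τ
  | _, [], hh, _ => hh
  | h, g :: gs, hh, hgs =>
      Shaped.mkApp_of_ground (h := .app h g) (gs := gs) (.app hh (hgs g List.mem_cons_self))
        fun x hx => hgs x (List.mem_cons_of_mem _ hx)

lemma contract {N : G.NtBar} {ts : List G.barScheme.T} {τ : Ty}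
    {e : Tm (G.Sig ⊕ G.NtBar ⊕ Fin (G.barScheme.ntTy N).arity)}
    (h : G.Shaped (_root_.mkApp (.sym (.inr N)) ts) τ) (hr : G.barScheme.rule N = some e)
    (hl : ts.length = (G.barScheme.ntTy N).arity) :
    G.Shaped (G.barScheme.inst e fun i => ts.get (Fin.cast hl.symm i)) τ := by
  rcases h.mkApp_inv with ⟨rfl, rfl, rfl | rfl⟩ | ⟨us, rfl, rfl, hu⟩
  · cases hr
    have hS := PartialApp.nt (G := G) G.S
    rw [G.S_ty] at hS
    exact .applyDelta hS
  · cases hr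
  obtain ⟨tys, hty, hus⟩ := hu.spine
  rcases N with F | a | b
  · obtain ⟨e₀, he₀, rfl⟩ := Option.map_eq_some_iff.mp hr
    rw [Ty.eq_map_bar_of_bar_eq_foldr _ _ hty] at hus
    exact .applyDelta <| PartialApp.inst_barBody (G.ruleTyped F e₀ he₀)
      (PartialApp.get_append_of_forall₂ hus _ hl)
  · cases hr
    rw [Ty.eq_map_bar_of_bar_eq_foldr _ _ hty] at hus
    rw [aBody]
    erw [inst_mkApp, List.map_ofFn]
    refine .mkApp_of_ground ?_ ?_
    · rw [List.length_ofFn, Ty.foldr_replicate_arity (G.sigOrder a)]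
      exact .term a
    · simp only [List.mem_ofFn]
      rintro _ ⟨i, rfl⟩
      have hi := PartialApp.get_append_of_forall₂ hus _ hl i
      rw [Ty.args_get_of_order_le_one (G.sigOrder a)] at hi
      exact .applyDelta hi
  · cases hu.arity_head

lemma step {t t' : G.barScheme.T} {τ : Ty} (h : G.Shaped t τ) (hs : G.barScheme.Step t t') :
    G.Shaped t' τ := by
  induction hs generalizing τ with
  | head hr hl => exact h.contract hr hl
  | appL hs ih =>
      cases h with
      | app h₁ h₂ => exact .app (ih h₁) h₂
      | applyDelta hu => exact absurd hs.hasRedex hu.not_hasRedex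
  | appR hs ih =>
      cases h with
      | app h₁ h₂ => exact .app h₁ (ih h₂)
      | applyDelta _ => exact absurd hs.hasRedex not_hasRedex_delta

end Shaped

lemma shaped_of_mem_acc {t : G.barScheme.T} (ht : t ∈ G.barScheme.Acc') : G.Shaped t .o := by
  induction ht with
  | refl => exact .init
  | tail _ hs ih => exact ih.step hs

lemma eq_of_isRedex_of_mem_acc {t s : G.barScheme.T} (ht : t ∈ G.barScheme.Acc')
    (hs : Subt s t) (hr : G.barScheme.IsRedex s) :
    s = .sym (.inr G.initNt) ∨
      ∃ N us, s = mkApp (.sym (.inr N)) (us ++ [.sym (.inr G.deltaNt)]) ∧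
        G.PartialApp (mkApp (.sym (.inr N)) us) (.arr .o .o) := by
  rcases (G.shaped_of_mem_acc ht).subt hs with ⟨τ, h⟩ | ⟨σ, h⟩
  · exact h.eq_of_isRedex hr
  · exact absurd hr h.not_isRedex

end HORS

theorem barScheme_redex_characterisation_general (G : HORS)
    (t : (G.barScheme).T) (ht : t ∈ (G.barScheme).Acc')
    (s : (G.barScheme).T) (hs : Subt s t) :
    ((G.barScheme).IsRedex s ↔
      (s = Tm.sym (Sum.inr G.initNt) ∨
        ∃ (N : G.NtBar) (ts : List (G.barScheme).T),
          s = mkApp (Tm.sym (Sum.inr N)) (ts ++ [Tm.sym (Sum.inr G.deltaNt)]) ∧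
          ((G.barScheme).rule N).isSome ∧
          ts.length + 1 = ((G.barScheme).ntTy N).arity)) ∧
    (∀ (N : G.NtBar) (ts : List (G.barScheme).T),
      s = mkApp (Tm.sym (Sum.inr N)) (ts ++ [Tm.sym (Sum.inr G.deltaNt)]) →
      (G.barScheme).IsRedex s →
      ∀ ti ∈ ts, ¬ Subt (Tm.sym (Sum.inr G.deltaNt)) ti) := by
  refine ⟨⟨fun hr => ?_, ?_⟩, ?_⟩
  · rcases HORS.eq_of_isRedex_of_mem_acc ht hs hr with rfl | ⟨N, us, rfl, hu⟩
    · exact .inl rfl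
    obtain ⟨N', ts, e, -, hsome⟩ := hr
    obtain ⟨hN, -⟩ := mkApp_sym_inj e
    cases hN
    exact .inr ⟨N, us, rfl, hsome, hu.arity_head.symm⟩
  · rintro (rfl | ⟨N, ts, rfl, hsome, hl⟩)
    · exact ⟨G.initNt, [], rfl, rfl, rfl⟩
    · exact ⟨N, ts ++ [_], rfl, by rw [List.length_append]; exact hl, hsome⟩
  · rintro N ts rfl hr ti hti hΔ
    rcases HORS.eq_of_isRedex_of_mem_acc ht hs hr with e | ⟨N', us, e, hu⟩
    · exact List.cons_ne_nil _ _ (List.append_eq_nil_iff.mp (mkApp_eq_sym e).1).2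
    obtain ⟨-, e⟩ := mkApp_sym_inj e
    rw [List.append_cancel_right e] at hti
    obtain ⟨σ, hti⟩ := hu.subt (subt_mkApp_of_mem hti)
    exact hti.not_subt_delta hΔ

/-- in Ḡ, a ground subterm of a term reachable from I is a redex
iff it is the initial non-terminal I or of the form F̄ t₁ ... t_k Δ (a fully
applied non-terminal possessing a rule, whose last argument is Δ); moreover no
argument tᵢ of such a redex contains an occurrence of Δ. -/
theorem barScheme_redex_characterisation (G : HORS)
    (t : (G.barScheme).T) (ht : t ∈ (G.barScheme).Acc')
    (s : (G.barScheme).T) (hs : Subt s t)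
    (hground : HasType (G.barScheme).symTy s Ty.o) :
    ((G.barScheme).IsRedex s ↔
      (s = Tm.sym (Sum.inr G.initNt) ∨
        ∃ (N : G.NtBar) (ts : List (G.barScheme).T),
          s = mkApp (Tm.sym (Sum.inr N)) (ts ++ [Tm.sym (Sum.inr G.deltaNt)]) ∧
          ((G.barScheme).rule N).isSome ∧
          ts.length + 1 = ((G.barScheme).ntTy N).arity)) ∧
    (∀ (N : G.NtBar) (ts : List (G.barScheme).T),
      s = mkApp (Tm.sym (Sum.inr N)) (ts ++ [Tm.sym (Sum.inr G.deltaNt)]) →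
      (G.barScheme).IsRedex s →
      ∀ ti ∈ ts, ¬ Subt (Tm.sym (Sum.inr G.deltaNt)) ti) :=
  barScheme_redex_characterisation_general G t ht s hs
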